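/- Completeness of the BPEL/PiCore bisimulation: for every BPEL activity B, PiCore event system ES and state s, if B and ES are trace-equivalent at s (Σ ⊢ (B,s) ≈≈ (ES,s)), then they are bisimilar at s (Σ ⊢ (B,s) ≈ (ES,s)). -/

import Mathlib

namespace PiCore

/-- Event systems of the PiCore event specification language. -/
inductive EventSys (Lbl Prog St : Type) : Type where
  | basic (ev : Set (Lbl × Set St × Prog))
  | atom (ev : Set (Lbl × Set St × Prog))
  | trig (P : Prog)
  | seq (S1 S2 : EventSys Lbl Prog St)
  | choice (S1 S2 : EventSys Lbl Prog St)
  | join (S1 S2 : EventSys Lbl Prog St)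
  | iter (b : Set St) (S : EventSys Lbl Prog St)

/-- Transition kinds of event systems: anonymous τ, event entry, atomic event entry. -/
inductive TranKind (Lbl : Type) : Type where
  | tau
  | evt (l : Lbl)
  | aevt (l : Lbl)

variable {Lbl Prog St Env : Type} (K : Type)
variable (ptran : Env → Prog × St → Prog × St → Prop) (bot : Prog)

/-- Labelled small-step semantics of event systems. -/
inductive esStep (Γ : Env) :
    EventSys Lbl Prog St × St → TranKind Lbl × K → EventSys Lbl Prog St × St → Prop where
  | basicEvt {ev : Set (Lbl × Set St × Prog)} {l g P s κ}
      (h1 : (l, g, P) ∈ ev) (h2 : s ∈ g) :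
      esStep Γ (.basic ev, s) (.evt l, κ) (.trig P, s)
  | atomEvt {ev : Set (Lbl × Set St × Prog)} {l g P s t κ}
      (h1 : (l, g, P) ∈ ev) (h2 : s ∈ g)
      (h3 : Relation.ReflTransGen (fun c c' => ptran Γ c c') (P, s) (bot, t)) :
      esStep Γ (.atom ev, s) (.aevt l, κ) (.trig bot, t)
  | trigEvt {P Q s t κ} (h : ptran Γ (P, s) (Q, t)) :
      esStep Γ (.trig P, s) (.tau, κ) (.trig Q, t)
  | seqStep {S1 S1' S2 s t} {δ : TranKind Lbl × K}
      (h : esStep Γ (S1, s) δ (S1', t)) (hne : S1' ≠ .trig bot) :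
      esStep Γ (.seq S1 S2, s) δ (.seq S1' S2, t)
  | seqFin {S1 S2 s t} {δ : TranKind Lbl × K}
      (h : esStep Γ (S1, s) δ (.trig bot, t)) :
      esStep Γ (.seq S1 S2, s) δ (S2, t)
  | choice1 {S1 S2 S1' s t} {δ : TranKind Lbl × K}
      (h : esStep Γ (S1, s) δ (S1', t)) :
      esStep Γ (.choice S1 S2, s) δ (S1', t)
  | choice2 {S1 S2 S2' s t} {δ : TranKind Lbl × K}
      (h : esStep Γ (S2, s) δ (S2', t)) :
      esStep Γ (.choice S1 S2, s) δ (S2', t)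
  | join1 {S1 S2 S1' s t} {δ : TranKind Lbl × K}
      (h : esStep Γ (S1, s) δ (S1', t)) :
      esStep Γ (.join S1 S2, s) δ (.join S1' S2, t)
  | join2 {S1 S2 S2' s t} {δ : TranKind Lbl × K}
      (h : esStep Γ (S2, s) δ (S2', t)) :
      esStep Γ (.join S1 S2, s) δ (.join S1 S2', t)
  | joinFin {s κ} :
      esStep Γ (.join (.trig bot) (.trig bot), s) (.tau, κ) (.trig bot, s)
  | iterT {b S s κ} (h : s ∈ b) (hne : S ≠ .trig bot) :
      esStep Γ (.iter b S, s) (.tau, κ) (.seq S (.iter b S), s)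
  | iterF {b S s κ} (h : s ∉ b) :
      esStep Γ (.iter b S, s) (.tau, κ) (.trig bot, s)

/-- Linear computations of event systems. -/
inductive cpts (Γ : Env) : List (EventSys Lbl Prog St × St) → Prop where
  | one {S s} : cpts Γ [(S, s)]
  | env {S s t cs} (h : cpts Γ ((S, t) :: cs)) : cpts Γ ((S, s) :: (S, t) :: cs)
  | act {S1 S2 s t cs} {δ : TranKind Lbl × K}
      (h1 : esStep K ptran bot Γ (S1, s) δ (S2, t))
      (h2 : cpts Γ ((S2, t) :: cs)) : cpts Γ ((S1, s) :: (S2, t) :: cs)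

/-- Sequential lifting of a computation. -/
def liftSeq (Q : EventSys Lbl Prog St) (c : List (EventSys Lbl Prog St × St)) :
    List (EventSys Lbl Prog St × St) :=
  c.map fun p => (.seq p.1 Q, p.2)

/-- Modular computations of event systems. -/
inductive cptsM (Γ : Env) : List (EventSys Lbl Prog St × St) → Prop where
  | one {S s} : cptsM Γ [(S, s)]
  | env {S s t cs} (h : cptsM Γ ((S, t) :: cs)) : cptsM Γ ((S, s) :: (S, t) :: cs)
  | trigEvt {P Q s t cs} (h : ptran Γ (P, s) (Q, t))
      (h2 : cptsM Γ ((.trig Q, t) :: cs)) :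
      cptsM Γ ((.trig P, s) :: (.trig Q, t) :: cs)
  | basicEvt {ev : Set (Lbl × Set St × Prog)} {l g P s cs}
      (h1 : (l, g, P) ∈ ev) (h2 : s ∈ g)
      (h3 : cptsM Γ ((.trig P, s) :: cs)) :
      cptsM Γ ((.basic ev, s) :: (.trig P, s) :: cs)
  | atomEvt {ev : Set (Lbl × Set St × Prog)} {l g P s t cs}
      (h1 : (l, g, P) ∈ ev) (h2 : s ∈ g)
      (h3 : Relation.ReflTransGen (fun c c' => ptran Γ c c') (P, s) (bot, t))
      (h4 : cptsM Γ ((.trig bot, t) :: cs)) :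
      cptsM Γ ((.atom ev, s) :: (.trig bot, t) :: cs)
  | seqStep {S1 S1' S2 s t cs} {δ : TranKind Lbl × K}
      (h : esStep K ptran bot Γ (S1, s) δ (S1', t)) (hne : S1' ≠ .trig bot)
      (h2 : cptsM Γ ((.seq S1' S2, t) :: cs)) :
      cptsM Γ ((.seq S1 S2, s) :: (.seq S1' S2, t) :: cs)
  | seqFin {S1 S2 s t cs} {δ : TranKind Lbl × K}
      (h : esStep K ptran bot Γ (S1, s) δ (.trig bot, t))
      (h2 : cptsM Γ ((S2, t) :: cs)) :
      cptsM Γ ((.seq S1 S2, s) :: (S2, t) :: cs)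
  | chc1 {S1 S2 S1' s t cs} {δ : TranKind Lbl × K}
      (h : esStep K ptran bot Γ (S1, s) δ (S1', t))
      (h2 : cptsM Γ ((S1', t) :: cs)) :
      cptsM Γ ((.choice S1 S2, s) :: (S1', t) :: cs)
  | chc2 {S1 S2 S2' s t cs} {δ : TranKind Lbl × K}
      (h : esStep K ptran bot Γ (S2, s) δ (S2', t))
      (h2 : cptsM Γ ((S2', t) :: cs)) :
      cptsM Γ ((.choice S1 S2, s) :: (S2', t) :: cs)
  | join1 {S1 S2 S1' s t cs} {δ : TranKind Lbl × K}
      (h : esStep K ptran bot Γ (S1, s) δ (S1', t))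
      (h2 : cptsM Γ ((.join S1' S2, t) :: cs)) :
      cptsM Γ ((.join S1 S2, s) :: (.join S1' S2, t) :: cs)
  | join2 {S1 S2 S2' s t cs} {δ : TranKind Lbl × K}
      (h : esStep K ptran bot Γ (S2, s) δ (S2', t))
      (h2 : cptsM Γ ((.join S1 S2', t) :: cs)) :
      cptsM Γ ((.join S1 S2, s) :: (.join S1 S2', t) :: cs)
  | joinFin {s cs} (h : cptsM Γ ((.trig bot, s) :: cs)) :
      cptsM Γ ((.join (.trig bot) (.trig bot), s) :: (.trig bot, s) :: cs)
  | iterF {b S s cs} (h : s ∉ b) (h2 : cptsM Γ ((.trig bot, s) :: cs)) :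
      cptsM Γ ((.iter b S, s) :: (.trig bot, s) :: cs)
  | iterTOne {b S s cs} (h : s ∈ b) (h2 : cptsM Γ ((S, s) :: cs)) :
      cptsM Γ ((.iter b S, s) :: liftSeq (.iter b S) ((S, s) :: cs))
  | iterTMore {b S s t cs cs'} {δ : TranKind Lbl × K}
      (h : s ∈ b) (h2 : cptsM Γ ((S, s) :: cs))
      (h3 : esStep K ptran bot Γ (((S, s) :: cs).getLast (List.cons_ne_nil _ _)) δ
              (.trig bot, t))
      (h4 : cptsM Γ ((.iter b S, t) :: cs')) :
      cptsM Γ ((.iter b S, s) ::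
        (liftSeq (.iter b S) ((S, s) :: cs) ++ (.iter b S, t) :: cs'))



end PiCore

namespace BPEL

open PiCore

/-- An IMP-like program language: the terminal program ⊥, atomic state
transformations `basic f`, and sequencing. -/
inductive Imp (St : Type) : Type where
  | fin
  | basic (f : St → St)
  | seq (P Q : Imp St)

/-- The `SKIP` statement. -/
def SKIP (St : Type) : Imp St := .basic id

/-- Small-step semantics of the IMP-like language. -/
inductive impTran {St : Type} : Imp St × St → Imp St × St → Prop where
  | basic {f : St → St} {s : St} : impTran (.basic f, s) (.fin, f s)
  | seqStep {P P' Q : Imp St} {s t : St}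
      (h : impTran (P, s) (P', t)) (hne : P' ≠ .fin) :
      impTran (.seq P Q, s) (.seq P' Q, t)
  | seqFin {P Q : Imp St} {s t : St} (h : impTran (P, s) (.fin, t)) :
      impTran (.seq P Q, s) (Q, t)

/-- Flow element of a BPEL activity: optional targets (a join condition and a
list of target links) and optional sources (links with transition conditions). -/
structure FlowEle (St : Type) : Type where
  targets : Option ((St → Prop) × List String)
  sources : Option (List (String × (St → Prop)))

mutual
/-- Abstract syntax of (a core subset of) BPEL activities. -/
inductive Activity (St : Type) : Type where
  | invoke (fls : FlowEle St) (ptl ptt opn : String) (spc : St → St)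
      (cts : List (String × Activity St)) (cta : Activity St)
  | receive (fls : FlowEle St) (ptl ptt opn : String) (spc : St → St)
  | reply (fls : FlowEle St) (ptl ptt opn : String)
  | assign (fls : FlowEle St) (spc : St → St)
  | wait (fls : FlowEle St) (time : ℕ)
  | empty (fls : FlowEle St)
  | seq (A1 A2 : Activity St)
  | ifA (c : Set St) (A1 A2 : Activity St)
  | whileA (c : Set St) (A : Activity St)
  | flow (A1 A2 : Activity St)
  | pick (H1 H2 : EventHandler St)
  | fin

/-- BPEL event handlers. -/
inductive EventHandler (St : Type) : Type where
  | onMessage (ptl ptt opn : String) (spc : St → St) (A : Activity St)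
  | onAlarm (time : ℕ) (A : Activity St)
end

section Sem
variable {St : Type}
variable (tick : St → ℕ)
variable (targetsSat : Option ((St → Prop) × List String) → St → Prop)
variable (fireSources : Option (List (String × (St → Prop))) → St → St)

/-- Small-step semantics of BPEL event handlers. -/
inductive ehStep : EventHandler St → St → Activity St → St → Prop where
  | onMessage {ptl ptt opn spc A s} :
      ehStep (.onMessage ptl ptt opn spc A) s A (spc s)
  | onAlarm {time A s} (h : time > tick s) :
      ehStep (.onAlarm time A) s A s

/-- Small-step operational semantics of BPEL activities. -/
inductive bpelStep : Activity St → St → Activity St → St → Prop where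
  | invokeSuc {fls ptl ptt opn spc cts cta s}
      (h : targetsSat fls.targets s) :
      bpelStep (.invoke fls ptl ptt opn spc cts cta) s .fin
        (fireSources fls.sources (spc s))
  | invokeFault {fls ptl ptt opn spc cts cta s} {evh : Activity St}
      (h : targetsSat fls.targets s)
      (hm : evh ∈ cts.map Prod.snd ∨ evh = cta) :
      bpelStep (.invoke fls ptl ptt opn spc cts cta) s evh
        (fireSources fls.sources s)
  | receive {fls ptl ptt opn spc s} (h : targetsSat fls.targets s) :
      bpelStep (.receive fls ptl ptt opn spc) s .fin
        (fireSources fls.sources (spc s))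
  | reply {fls ptl ptt opn s} (h : targetsSat fls.targets s) :
      bpelStep (.reply fls ptl ptt opn) s .fin (fireSources fls.sources s)
  | assign {fls spc s} (h : targetsSat fls.targets s) :
      bpelStep (.assign fls spc) s .fin (fireSources fls.sources (spc s))
  | wait {fls time s} (h : targetsSat fls.targets s) (ht : time > tick s) :
      bpelStep (.wait fls time) s .fin (fireSources fls.sources s)
  | empty {fls s} (h : targetsSat fls.targets s) :
      bpelStep (.empty fls) s .fin (fireSources fls.sources s)
  | seqStep {A1 A1' A2 s t} (h : bpelStep A1 s A1' t) (hne : A1' ≠ .fin) :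
      bpelStep (.seq A1 A2) s (.seq A1' A2) t
  | seqFin {A1 A2 s t} (h : bpelStep A1 s .fin t) :
      bpelStep (.seq A1 A2) s A2 t
  | ifT {c A1 A2 s} (h : s ∈ c) : bpelStep (.ifA c A1 A2) s A1 s
  | ifF {c A1 A2 s} (h : s ∉ c) : bpelStep (.ifA c A1 A2) s A2 s
  | whileT {c A s} (h : s ∈ c) (hne : A ≠ .fin) :
      bpelStep (.whileA c A) s (.seq A (.whileA c A)) s
  | whileF {c A s} (h : s ∉ c) : bpelStep (.whileA c A) s .fin s
  | flow1 {A1 A1' A2 s t} (h : bpelStep A1 s A1' t) :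
      bpelStep (.flow A1 A2) s (.flow A1' A2) t
  | flow2 {A1 A2 A2' s t} (h : bpelStep A2 s A2' t) :
      bpelStep (.flow A1 A2) s (.flow A1 A2') t
  | flowFin {s} : bpelStep (.flow .fin .fin) s .fin s
  | pick1 {H1 H2 A s t} (h : ehStep tick H1 s A t) :
      bpelStep (.pick H1 H2) s A t
  | pick2 {H1 H2 A s t} (h : ehStep tick H2 s A t) :
      bpelStep (.pick H1 H2) s A t

end Sem

/-- Labels of events in the PiCore translation of BPEL, encoding the activity
kind and its partner-link / port-type / operation names. -/
inductive EvtLbl : Type where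
  | invoke (ptl ptt opn : String)
  | receive (ptl ptt opn : String)
  | reply (ptl ptt opn : String)
  | assign
  | wait
  | empty
  | ifT
  | ifF
  | onMessage (ptl ptt opn : String)
  | onAlarm

/-- Event systems of the BPEL translation. -/
abbrev ES (St : Type) : Type := EventSys EvtLbl (Imp St) St

/-- Nondeterministic choice of a list of event systems. -/
def chooseList {St : Type} : List (ES St) → ES St
  | [] => .trig .fin
  | [a] => a
  | a :: b :: xs => .choice a (chooseList (b :: xs))

section Compile
variable {St : Type}
variable (tick : St → ℕ)
variable (targetsSat : Option ((St → Prop) × List String) → St → Prop)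
variable (fireSources : Option (List (String × (St → Prop))) → St → St)

/-- The failure event of an `invoke` activity: it only fires the source links. -/
def failEvt (fls : FlowEle St) (ptl ptt opn : String) : ES St :=
  .atom {(EvtLbl.invoke ptl ptt opn, {s | targetsSat fls.targets s},
          Imp.basic (fireSources fls.sources))}

mutual
/-- The verified translation from BPEL activities to PiCore event systems. -/
def compile : Activity St → ES St
  | .invoke fls ptl ptt opn spc cts cta =>
      .choice
        (.atom {(EvtLbl.invoke ptl ptt opn, {s | targetsSat fls.targets s},
            Imp.seq (.basic spc) (.basic (fireSources fls.sources)))})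
        (chooseList
          (.seq (failEvt targetsSat fireSources fls ptl ptt opn) (compile cta) ::
            compileList fls ptl ptt opn cts))
  | .receive fls ptl ptt opn spc =>
      .atom {(EvtLbl.receive ptl ptt opn, {s | targetsSat fls.targets s},
          Imp.seq (.basic spc) (.basic (fireSources fls.sources)))}
  | .reply fls ptl ptt opn =>
      .atom {(EvtLbl.reply ptl ptt opn, {s | targetsSat fls.targets s},
          Imp.basic (fireSources fls.sources))}
  | .assign fls spc =>
      .atom {(EvtLbl.assign, {s | targetsSat fls.targets s},
          Imp.seq (.basic spc) (.basic (fireSources fls.sources)))}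
  | .wait fls time =>
      .atom {(EvtLbl.wait, {s | targetsSat fls.targets s ∧ time > tick s},
          Imp.basic (fireSources fls.sources))}
  | .empty fls =>
      .atom {(EvtLbl.empty, {s | targetsSat fls.targets s},
          Imp.basic (fireSources fls.sources))}
  | .seq A1 A2 => .seq (compile A1) (compile A2)
  | .ifA c A1 A2 =>
      .choice (.seq (.atom {(EvtLbl.ifT, c, SKIP St)}) (compile A1))
              (.seq (.atom {(EvtLbl.ifF, cᶜ, SKIP St)}) (compile A2))
  | .whileA c A => .iter c (compile A)
  | .flow A1 A2 => .join (compile A1) (compile A2)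
  | .pick H1 H2 => .choice (compileEH H1) (compileEH H2)
  | .fin => .trig .fin

/-- Translation of BPEL event handlers. -/
def compileEH : EventHandler St → ES St
  | .onMessage ptl ptt opn spc A =>
      .seq (.atom {(EvtLbl.onMessage ptl ptt opn, Set.univ, Imp.basic spc)})
           (compile A)
  | .onAlarm time A =>
      .seq (.atom {(EvtLbl.onAlarm, {s | time > tick s}, SKIP St)})
           (compile A)

/-- Translation of the fault handlers of an `invoke` activity. -/
def compileList (fls : FlowEle St) (ptl ptt opn : String) :
    List (String × Activity St) → List (ES St)
  | [] => []
  | (_, a) :: rest =>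
      .seq (failEvt targetsSat fireSources fls ptl ptt opn) (compile a) ::
        compileList fls ptl ptt opn rest
end

end Compile



section Bisim
variable {St : Type}
variable (tick : St → ℕ)
variable (targetsSat : Option ((St → Prop) × List String) → St → Prop)
variable (fireSources : Option (List (String × (St → Prop))) → St → St)

/-- The small-step semantics of the PiCore event systems used by the BPEL
translation (over the IMP-like language, with a trivial static configuration
and trivial event-system identifiers). -/
abbrev esStepB :
    ES St × St → PiCore.TranKind EvtLbl × Unit → ES St × St → Prop :=
  PiCore.esStep Unit (fun _ : Unit => impTran) Imp.fin ()

/-- Computations of BPEL activities: nonempty lists of configurations closed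
under singletons, environment steps and BPEL steps. -/
inductive bpelCpts : List (Activity St × St) → Prop where
  | one {B s} : bpelCpts [(B, s)]
  | env {B s t cs} (h : bpelCpts ((B, t) :: cs)) :
      bpelCpts ((B, s) :: (B, t) :: cs)
  | step {B B' s t cs}
      (h : bpelStep tick targetsSat fireSources B s B' t)
      (h2 : bpelCpts ((B', t) :: cs)) :
      bpelCpts ((B, s) :: (B', t) :: cs)

/-- Pointwise equivalence of a BPEL computation and a PiCore computation:
equal length, equal states at each position, and at each position the event
system is the translation of the activity. -/
def treq : List (Activity St × St) → List (ES St × St) → Prop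
  | [], [] => True
  | (B, s) :: tr1, (S, t) :: tr2 =>
      compile tick targetsSat fireSources B = S ∧ s = t ∧ treq tr1 tr2
  | _, _ => False

/-- Trace equivalence of a BPEL activity and a PiCore event system from a
common initial state: `Σ ⊢ (B,s) ≈≈ (ES,s)`. -/
def TraceEq (B : Activity St) (s : St) (S : ES St) : Prop :=
  (∀ tr : List (Activity St × St),
     bpelCpts tick targetsSat fireSources tr → tr.head? = some (B, s) →
     ∃ tr' : List (ES St × St),
       (PiCore.cpts Unit (fun _ : Unit => impTran) Imp.fin () tr' ∧
         tr'.head? = some (S, s)) ∧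
       treq tick targetsSat fireSources tr tr') ∧
  (∀ tr' : List (ES St × St),
     PiCore.cpts Unit (fun _ : Unit => impTran) Imp.fin () tr' →
     tr'.head? = some (S, s) →
     ∃ tr : List (Activity St × St),
       (bpelCpts tick targetsSat fireSources tr ∧ tr.head? = some (B, s)) ∧
       treq tick targetsSat fireSources tr tr')

/-- `R` is a bisimulation between BPEL activities and PiCore event systems. -/
def IsBisim (R : Activity St → St → ES St → Prop) : Prop :=
  ∀ B s S, R B s S →
    (∀ B' t, bpelStep tick targetsSat fireSources B s B' t →
      ∃ (δ : PiCore.TranKind EvtLbl × Unit) (S' : ES St),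
        esStepB (S, s) δ (S', t) ∧ R B' t S') ∧
    (∀ (δ : PiCore.TranKind EvtLbl × Unit) (S' : ES St) (t : St),
      esStepB (S, s) δ (S', t) →
      ∃ B' : Activity St,
        bpelStep tick targetsSat fireSources B s B' t ∧ R B' t S') ∧
    S = compile tick targetsSat fireSources B

/-- Bisimilarity of a BPEL activity and a PiCore event system at a state
(`Σ ⊢ (B,s) ≈ (ES,s)`): the greatest bisimulation. -/
def Bisim (B : Activity St) (s : St) (S : ES St) : Prop :=
  ∃ R : Activity St → St → ES St → Prop,
    IsBisim tick targetsSat fireSources R ∧ R B s S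

end Bisim

end BPEL

/-! The graph of `compile` is itself a bisimulation: every BPEL step `A → A'` is matched by a
PiCore step `compile A → compile A'`, and conversely the steps of each compiled construct mirror
exactly the BPEL rules for that construct, so every PiCore step of `compile A` arises this way.
Trace equivalence, applied to the one-point computation `[(B, s)]`, forces `S = compile B`. -/

namespace BPEL
open PiCore Relation

variable {St : Type}

section Imp

theorem not_impTran_fin {s : St} {c : Imp St × St} : ¬ impTran (.fin, s) c := by
  rintro ⟨⟩

theorem reflTransGen_impTran_fin_iff {s t : St} :
    ReflTransGen impTran (Imp.fin, s) (.fin, t) ↔ t = s := by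
  refine ⟨fun h => ?_, by rintro rfl; rfl⟩
  rcases h.cases_head with h | ⟨c, hc, -⟩
  · exact (Prod.mk.inj h).2.symm
  · exact absurd hc not_impTran_fin

theorem reflTransGen_impTran_basic_iff {f : St → St} {s t : St} :
    ReflTransGen impTran (Imp.basic f, s) (.fin, t) ↔ t = f s := by
  refine ⟨fun h => ?_, by rintro rfl; exact .single .basic⟩
  rcases h.cases_head with h | ⟨c, ⟨⟩, h⟩
  · cases h
  · exact reflTransGen_impTran_fin_iff.1 h

theorem reflTransGen_impTran_seq_basic_iff {f g : St → St} {s t : St} :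
    ReflTransGen impTran (Imp.seq (.basic f) (.basic g), s) (.fin, t) ↔ t = g (f s) := by
  refine ⟨fun h => ?_, by rintro rfl; exact .head (.seqFin .basic) (.single .basic)⟩
  rcases h.cases_head with h | ⟨c, hc, h⟩
  · cases h
  · cases hc with
    | seqStep hf hne => cases hf; exact absurd rfl hne
    | seqFin hf => cases hf; exact reflTransGen_impTran_basic_iff.1 h

end Imp

section EventSystem

variable {l : EvtLbl} {g : Set St} {P : Imp St} {s t : St} {δ : TranKind EvtLbl × Unit}
  {S S' : ES St}

theorem not_esStepB_trig_fin {c : ES St × St} : ¬ esStepB (.trig .fin, s) δ c := by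
  rintro (_ | _ | ⟨h⟩)
  exact not_impTran_fin h

theorem esStepB_atom_singleton_inv (h : esStepB (.atom {(l, g, P)}, s) δ (S', t)) :
    S' = .trig .fin ∧ s ∈ g ∧ ReflTransGen impTran (P, s) (.fin, t) := by
  cases h with
  | atomEvt hm hg hP =>
    obtain ⟨-, rfl, rfl⟩ := Prod.ext_iff.1 hm
    exact ⟨rfl, hg, hP⟩

theorem esStepB_atom_basic_inv {f : St → St}
    (h : esStepB (.atom {(l, g, .basic f)}, s) δ (S', t)) :
    S' = .trig .fin ∧ s ∈ g ∧ t = f s := by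
  obtain ⟨rfl, hg, hP⟩ := esStepB_atom_singleton_inv h
  exact ⟨rfl, hg, reflTransGen_impTran_basic_iff.1 hP⟩

theorem esStepB_atom_seq_basic_inv {f₁ f₂ : St → St}
    (h : esStepB (.atom {(l, g, .seq (.basic f₁) (.basic f₂))}, s) δ (S', t)) :
    S' = .trig .fin ∧ s ∈ g ∧ t = f₂ (f₁ s) := by
  obtain ⟨rfl, hg, hP⟩ := esStepB_atom_singleton_inv h
  exact ⟨rfl, hg, reflTransGen_impTran_seq_basic_iff.1 hP⟩

theorem esStepB_seq_atom_basic_inv {f : St → St}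
    (h : esStepB (.seq (.atom {(l, g, .basic f)}) S, s) δ (S', t)) :
    S' = S ∧ s ∈ g ∧ t = f s := by
  cases h with
  | seqStep h hne => exact absurd (esStepB_atom_basic_inv h).1 hne
  | seqFin h => exact ⟨rfl, (esStepB_atom_basic_inv h).2⟩

theorem esStepB_join_inv {S₁ S₂ : ES St} (h : esStepB (.join S₁ S₂, s) δ (S', t)) :
    (∃ S₁', esStepB (S₁, s) δ (S₁', t) ∧ S' = .join S₁' S₂) ∨
      (∃ S₂', esStepB (S₂, s) δ (S₂', t) ∧ S' = .join S₁ S₂') ∨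
      (S₁ = .trig .fin ∧ S₂ = .trig .fin ∧ S' = .trig .fin ∧ t = s) := by
  cases h with
  | join1 h => exact .inl ⟨_, h, rfl⟩
  | join2 h => exact .inr (.inl ⟨_, h, rfl⟩)
  | joinFin => exact .inr (.inr ⟨rfl, rfl, rfl, rfl⟩)

theorem esStepB_chooseList_iff {L : List (ES St)} {c : ES St × St} :
    esStepB (chooseList L, s) δ c ↔ ∃ x ∈ L, esStepB (x, s) δ c := by
  match L with
  | [] => simpa [chooseList] using not_esStepB_trig_fin
  | [a] => simp [chooseList]
  | a :: b :: L =>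
    constructor
    · intro h
      cases h with
      | choice1 h => exact ⟨a, List.mem_cons_self, h⟩
      | choice2 h =>
        obtain ⟨x, hx, h⟩ := esStepB_chooseList_iff.1 h
        exact ⟨x, List.mem_cons_of_mem _ hx, h⟩
    · rintro ⟨x, hx, h⟩
      rcases List.mem_cons.1 hx with rfl | hx
      · exact .choice1 h
      · exact .choice2 (esStepB_chooseList_iff.2 ⟨x, hx, h⟩)

end EventSystem

section Compile

variable (tick : St → ℕ)
variable (targetsSat : Option ((St → Prop) × List String) → St → Prop)
variable (fireSources : Option (List (String × (St → Prop))) → St → St)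

theorem compile_eq_trig_fin_iff {A : Activity St} :
    compile tick targetsSat fireSources A = .trig .fin ↔ A = .fin := by
  cases A <;> simp [compile]

theorem cons_compileList_eq_map {fls : FlowEle St} {ptl ptt opn : String}
    (cta : Activity St) (cts : List (String × Activity St)) :
    .seq (failEvt targetsSat fireSources fls ptl ptt opn)
          (compile tick targetsSat fireSources cta) ::
        compileList tick targetsSat fireSources fls ptl ptt opn cts =
      (cta :: cts.map Prod.snd).map fun a =>
        .seq (failEvt targetsSat fireSources fls ptl ptt opn)
          (compile tick targetsSat fireSources a) := by
  induction cts with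
  | nil => rfl
  | cons p cts ih => simpa [compileList] using ih

theorem esStepB_seq_failEvt {fls : FlowEle St} {ptl ptt opn : String} {S : ES St} {s : St}
    (h : targetsSat fls.targets s) :
    esStepB (.seq (failEvt targetsSat fireSources fls ptl ptt opn) S, s)
      (.aevt (.invoke ptl ptt opn), ()) (S, fireSources fls.sources s) :=
  .seqFin (.atomEvt rfl h (reflTransGen_impTran_basic_iff.2 rfl))

theorem esStepB_compileEH_of_ehStep {H : EventHandler St} {s t : St} {A : Activity St}
    (h : ehStep tick H s A t) :
    ∃ δ, esStepB (compileEH tick targetsSat fireSources H, s) δ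
      (compile tick targetsSat fireSources A, t) := by
  cases h with
  | onMessage =>
    exact ⟨(_, ()), .seqFin (.atomEvt rfl trivial (reflTransGen_impTran_basic_iff.2 rfl))⟩
  | onAlarm h =>
    exact ⟨(_, ()), .seqFin (.atomEvt rfl h (reflTransGen_impTran_basic_iff.2 rfl))⟩

theorem esStepB_compile_of_bpelStep {A A' : Activity St} {s t : St}
    (h : bpelStep tick targetsSat fireSources A s A' t) :
    ∃ δ, esStepB (compile tick targetsSat fireSources A, s) δ
      (compile tick targetsSat fireSources A', t) := by
  induction h with
  | invokeSuc h =>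
    exact ⟨(_, ()), .choice1 (.atomEvt rfl h (reflTransGen_impTran_seq_basic_iff.2 rfl))⟩
  | receive h | assign h =>
    exact ⟨(_, ()), .atomEvt rfl h (reflTransGen_impTran_seq_basic_iff.2 rfl)⟩
  | @invokeFault fls ptl ptt opn _ cts cta _ evh h hm =>
    have hmem : .seq (failEvt targetsSat fireSources fls ptl ptt opn)
        (compile tick targetsSat fireSources evh) ∈
        .seq (failEvt targetsSat fireSources fls ptl ptt opn)
          (compile tick targetsSat fireSources cta) ::
          compileList tick targetsSat fireSources fls ptl ptt opn cts := by
      rw [cons_compileList_eq_map]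
      exact List.mem_map_of_mem (List.mem_cons.2 hm.symm)
    exact ⟨_, .choice2 (esStepB_chooseList_iff.2
      ⟨_, hmem, esStepB_seq_failEvt targetsSat fireSources h⟩)⟩
  | reply h | empty h =>
    exact ⟨(_, ()), .atomEvt rfl h (reflTransGen_impTran_basic_iff.2 rfl)⟩
  | wait h ht =>
    exact ⟨(_, ()), .atomEvt rfl ⟨h, ht⟩ (reflTransGen_impTran_basic_iff.2 rfl)⟩
  | seqStep _ hne ih =>
    obtain ⟨δ, h⟩ := ih
    exact ⟨δ, .seqStep h (mt (compile_eq_trig_fin_iff ..).1 hne)⟩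
  | seqFin _ ih =>
    obtain ⟨δ, h⟩ := ih
    exact ⟨δ, .seqFin h⟩
  | ifT h =>
    exact ⟨(_, ()), .choice1 (.seqFin (.atomEvt rfl h (reflTransGen_impTran_basic_iff.2 rfl)))⟩
  | ifF h =>
    exact ⟨(_, ()), .choice2 (.seqFin (.atomEvt rfl h (reflTransGen_impTran_basic_iff.2 rfl)))⟩
  | whileT h hne => exact ⟨(_, ()), .iterT h (mt (compile_eq_trig_fin_iff ..).1 hne)⟩
  | whileF h => exact ⟨(_, ()), .iterF h⟩
  | flow1 _ ih =>
    obtain ⟨δ, h⟩ := ih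
    exact ⟨δ, .join1 h⟩
  | flow2 _ ih =>
    obtain ⟨δ, h⟩ := ih
    exact ⟨δ, .join2 h⟩
  | flowFin => exact ⟨(_, ()), .joinFin⟩
  | pick1 h =>
    obtain ⟨δ, h⟩ := esStepB_compileEH_of_ehStep tick targetsSat fireSources h
    exact ⟨δ, .choice1 h⟩
  | pick2 h =>
    obtain ⟨δ, h⟩ := esStepB_compileEH_of_ehStep tick targetsSat fireSources h
    exact ⟨δ, .choice2 h⟩

theorem exists_ehStep_of_esStepB_compileEH {H : EventHandler St} {s t : St}
    {δ : TranKind EvtLbl × Unit} {S' : ES St}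
    (h : esStepB (compileEH tick targetsSat fireSources H, s) δ (S', t)) :
    ∃ A, ehStep tick H s A t ∧ S' = compile tick targetsSat fireSources A := by
  cases H with
  | onMessage ptl ptt opn spc A =>
    obtain ⟨rfl, -, rfl⟩ := esStepB_seq_atom_basic_inv h
    exact ⟨A, .onMessage, rfl⟩
  | onAlarm time A =>
    obtain ⟨rfl, hg, rfl⟩ := esStepB_seq_atom_basic_inv h
    exact ⟨A, .onAlarm hg, rfl⟩

theorem exists_bpelStep_of_esStepB_compile_invoke {fls : FlowEle St} {ptl ptt opn : String}
    {spc : St → St} {cts : List (String × Activity St)} {cta : Activity St} {s t : St}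
    {δ : TranKind EvtLbl × Unit} {S' : ES St}
    (h : esStepB (compile tick targetsSat fireSources (.invoke fls ptl ptt opn spc cts cta), s)
      δ (S', t)) :
    ∃ A', bpelStep tick targetsSat fireSources (.invoke fls ptl ptt opn spc cts cta) s A' t ∧
      S' = compile tick targetsSat fireSources A' := by
  cases h with
  | choice1 h =>
    obtain ⟨rfl, hg, rfl⟩ := esStepB_atom_seq_basic_inv h
    exact ⟨.fin, .invokeSuc hg, rfl⟩
  | choice2 h =>
    obtain ⟨x, hx, h⟩ := esStepB_chooseList_iff.1 h
    rw [cons_compileList_eq_map] at hx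
    obtain ⟨a, ha, rfl⟩ := List.mem_map.1 hx
    obtain ⟨rfl, hg, rfl⟩ := esStepB_seq_atom_basic_inv h
    exact ⟨a, .invokeFault hg (List.mem_cons.1 ha).symm, rfl⟩

theorem exists_bpelStep_of_esStepB_compile :
    ∀ (A : Activity St) {s t : St} {δ : TranKind EvtLbl × Unit} {S' : ES St},
      esStepB (compile tick targetsSat fireSources A, s) δ (S', t) →
      ∃ A', bpelStep tick targetsSat fireSources A s A' t ∧
        S' = compile tick targetsSat fireSources A'
  | .invoke .., _, _, _, _, h =>
    exists_bpelStep_of_esStepB_compile_invoke tick targetsSat fireSources h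
  | .receive .., _, _, _, _, h => by
    obtain ⟨rfl, hg, rfl⟩ := esStepB_atom_seq_basic_inv h
    exact ⟨.fin, .receive hg, rfl⟩
  | .assign .., _, _, _, _, h => by
    obtain ⟨rfl, hg, rfl⟩ := esStepB_atom_seq_basic_inv h
    exact ⟨.fin, .assign hg, rfl⟩
  | .reply .., _, _, _, _, h => by
    obtain ⟨rfl, hg, rfl⟩ := esStepB_atom_basic_inv h
    exact ⟨.fin, .reply hg, rfl⟩
  | .wait .., _, _, _, _, h => by
    obtain ⟨rfl, ⟨hg, ht⟩, rfl⟩ := esStepB_atom_basic_inv h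
    exact ⟨.fin, .wait hg ht, rfl⟩
  | .empty .., _, _, _, _, h => by
    obtain ⟨rfl, hg, rfl⟩ := esStepB_atom_basic_inv h
    exact ⟨.fin, .empty hg, rfl⟩
  | .seq A₁ A₂, _, _, _, _, h => by
    cases h with
    | seqStep h hne =>
      obtain ⟨A₁', hb, rfl⟩ := exists_bpelStep_of_esStepB_compile A₁ h
      exact ⟨.seq A₁' A₂, .seqStep hb (mt (compile_eq_trig_fin_iff ..).2 hne), rfl⟩
    | seqFin h =>
      obtain ⟨A₁', hb, hfin⟩ := exists_bpelStep_of_esStepB_compile A₁ h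
      rw [(compile_eq_trig_fin_iff ..).1 hfin.symm] at hb
      exact ⟨A₂, .seqFin hb, rfl⟩
  | .ifA c A₁ A₂, _, _, _, _, h => by
    cases h with
    | choice1 h =>
      obtain ⟨rfl, hg, rfl⟩ := esStepB_seq_atom_basic_inv h
      exact ⟨A₁, .ifT hg, rfl⟩
    | choice2 h =>
      obtain ⟨rfl, hg, rfl⟩ := esStepB_seq_atom_basic_inv h
      exact ⟨A₂, .ifF hg, rfl⟩
  | .whileA c A, _, _, _, _, h => by
    cases h with
    | iterT hc hne => exact ⟨_, .whileT hc (mt (compile_eq_trig_fin_iff ..).2 hne), rfl⟩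
    | iterF hc => exact ⟨.fin, .whileF hc, rfl⟩
  | .flow A₁ A₂, _, _, _, _, h => by
    rcases esStepB_join_inv h with ⟨S₁', h₁, rfl⟩ | ⟨S₂', h₂, rfl⟩ | ⟨h₁, h₂, rfl, rfl⟩
    · obtain ⟨A₁', hb, rfl⟩ := exists_bpelStep_of_esStepB_compile A₁ h₁
      exact ⟨.flow A₁' A₂, .flow1 hb, rfl⟩
    · obtain ⟨A₂', hb, rfl⟩ := exists_bpelStep_of_esStepB_compile A₂ h₂
      exact ⟨.flow A₁ A₂', .flow2 hb, rfl⟩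
    · rw [(compile_eq_trig_fin_iff ..).1 h₁, (compile_eq_trig_fin_iff ..).1 h₂]
      exact ⟨.fin, .flowFin, rfl⟩
  | .pick H₁ H₂, _, _, _, _, h => by
    cases h with
    | choice1 h =>
      obtain ⟨A, hA, rfl⟩ := exists_ehStep_of_esStepB_compileEH tick targetsSat fireSources h
      exact ⟨A, .pick1 hA, rfl⟩
    | choice2 h =>
      obtain ⟨A, hA, rfl⟩ := exists_ehStep_of_esStepB_compileEH tick targetsSat fireSources h
      exact ⟨A, .pick2 hA, rfl⟩
  | .fin, _, _, _, _, h => absurd h not_esStepB_trig_fin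

theorem isBisim_compile :
    IsBisim tick targetsSat fireSources fun A _ S => S = compile tick targetsSat fireSources A := by
  rintro A s S rfl
  refine ⟨fun A' t h => ?_, fun δ S' t h => ?_, rfl⟩
  · obtain ⟨δ, h⟩ := esStepB_compile_of_bpelStep tick targetsSat fireSources h
    exact ⟨δ, _, h, rfl⟩
  · exact exists_bpelStep_of_esStepB_compile tick targetsSat fireSources A h

theorem eq_compile_of_traceEq {B : Activity St} {s : St} {S : ES St}
    (h : TraceEq tick targetsSat fireSources B s S) :
    S = compile tick targetsSat fireSources B := by
  obtain ⟨tr', ⟨-, hhead⟩, htr⟩ := h.1 [(B, s)] .one rfl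
  rcases tr' with _ | ⟨⟨S₀, s₀⟩, tr'⟩
  · cases hhead
  · obtain ⟨rfl, -⟩ := Prod.ext_iff.1 (Option.some.inj hhead)
    exact htr.1.symm

end Compile

end BPEL

open PiCore BPEL in
/-- **Completeness of the BPEL/PiCore bisimulation:** trace equivalence implies
bisimilarity. -/
theorem bisim_complete {St : Type}
    (tick : St → ℕ)
    (targetsSat : Option ((St → Prop) × List String) → St → Prop)
    (fireSources : Option (List (String × (St → Prop))) → St → St) :
    ∀ (B : Activity St) (S : ES St) (s : St),
      TraceEq tick targetsSat fireSources B s S →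
      Bisim tick targetsSat fireSources B s S :=
  fun _ _ _ h => ⟨_, isBisim_compile tick targetsSat fireSources,
    eq_compile_of_traceEq tick targetsSat fireSources h⟩
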